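/- Let G be an abelian group and let R be a G-graded ring that is gr-prime and right gr-Goldie. Suppose a ∈ R is a nonzero homogeneous element such that the right ideal aR is gr-uniform. Then the right annihilator r-ann(a) is maximal among right annihilators of nonzero homogeneous elements of R; that is, for every nonzero homogeneous b ∈ R with r-ann(a) ⊆ r-ann(b), one has r-ann(a) = r-ann(b). -/

import Mathlib

/-- The right annihilator of an element, as an additive subgroup. -/
def rAnn {R : Type*} [Ring R] (a : R) : AddSubgroup R where
  carrier := {r : R | a * r = 0}
  zero_mem' := mul_zero a
  add_mem' := by intro x y hx hy; simp only [Set.mem_setOf_eq, mul_add] at *; rw [hx, hy, add_zero]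
  neg_mem' := by intro x hx; simp only [Set.mem_setOf_eq, mul_neg] at *; rw [hx, neg_zero]

/-- The right ideal `aR` generated by `a` (in a unital ring), as an additive subgroup. -/
def mulLeftRange {R : Type*} [Ring R] (a : R) : AddSubgroup R where
  carrier := Set.range (fun r : R => a * r)
  zero_mem' := ⟨0, mul_zero a⟩
  add_mem' := by rintro x y ⟨r, rfl⟩ ⟨s, rfl⟩; exact ⟨r + s, by simp [mul_add]⟩
  neg_mem' := by rintro x ⟨r, rfl⟩; exact ⟨-r, by simp [mul_neg]⟩

/-- A graded right ideal: an additive subgroup closed under right multiplication that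
contains all homogeneous components of its elements. -/
def IsGradedRightIdeal {G R : Type*} [AddCommGroup G] [DecidableEq G] [Ring R]
    (𝒜 : G → AddSubgroup R) [GradedRing 𝒜] (I : AddSubgroup R) : Prop :=
  (∀ a ∈ I, ∀ r : R, a * r ∈ I) ∧
  (∀ a ∈ I, ∀ g : G, (DirectSum.decompose 𝒜 a g : R) ∈ I)

/-- `R` is gr-prime: for homogeneous `a, b`, `aRb = 0` implies `a = 0` or `b = 0`. -/
def GrPrime {G R : Type*} [AddCommGroup G] [DecidableEq G] [Ring R]
    (𝒜 : G → AddSubgroup R) [GradedRing 𝒜] : Prop :=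
  ∀ a b : R, SetLike.IsHomogeneousElem 𝒜 a → SetLike.IsHomogeneousElem 𝒜 b →
    (∀ r : R, a * r * b = 0) → a = 0 ∨ b = 0

/-- `R` is right gr-Goldie: ACC on right annihilators of homogeneous elements, and no
infinite direct sum of nonzero graded right ideals. -/
def GrGoldie {G R : Type*} [AddCommGroup G] [DecidableEq G] [Ring R]
    (𝒜 : G → AddSubgroup R) [GradedRing 𝒜] : Prop :=
  (∀ f : ℕ → R, (∀ n, SetLike.IsHomogeneousElem 𝒜 (f n)) →
      ¬ StrictMono fun n => rAnn (f n)) ∧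
  ¬ ∃ I : ℕ → AddSubgroup R, (∀ n, IsGradedRightIdeal 𝒜 (I n)) ∧
      (∀ n, I n ≠ ⊥) ∧ iSupIndep I

/-- A graded right ideal `I` is gr-essential if it meets every nonzero graded right
ideal nontrivially. -/
def GrEssential {G R : Type*} [AddCommGroup G] [DecidableEq G] [Ring R]
    (𝒜 : G → AddSubgroup R) [GradedRing 𝒜] (I : AddSubgroup R) : Prop :=
  IsGradedRightIdeal 𝒜 I ∧
  ∀ K : AddSubgroup R, IsGradedRightIdeal 𝒜 K → K ≠ ⊥ → I ⊓ K ≠ ⊥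

/-- A graded right ideal `M` is gr-uniform if it is nonzero and any two nonzero graded
right ideals contained in `M` intersect nontrivially. -/
def GrUniform {G R : Type*} [AddCommGroup G] [DecidableEq G] [Ring R]
    (𝒜 : G → AddSubgroup R) [GradedRing 𝒜] (M : AddSubgroup R) : Prop :=
  M ≠ ⊥ ∧
  ∀ K L : AddSubgroup R, IsGradedRightIdeal 𝒜 K → IsGradedRightIdeal 𝒜 L →
    K ≤ M → L ≤ M → K ≠ ⊥ → L ≠ ⊥ → K ⊓ L ≠ ⊥


section Aux

open DirectSum

variable {G R : Type*} [AddCommGroup G] [DecidableEq G] [Ring R]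
    (𝒜 : G → AddSubgroup R) [GradedRing 𝒜]

lemma mem_rAnn {a r : R} : r ∈ rAnn a ↔ a * r = 0 := Iff.rfl

lemma mem_mulLeftRange {a x : R} : x ∈ mulLeftRange a ↔ ∃ r, a * r = x := Iff.rfl

lemma rAnn_le_rAnn_mul (a b : R) : rAnn b ≤ rAnn (a * b) := by
  intro r hr
  rw [mem_rAnn] at *
  rw [mul_assoc, hr, mul_zero]

lemma rAnn_le_rAnn_mul_mul (a b c : R) : rAnn c ≤ rAnn (a * b * c) := rAnn_le_rAnn_mul _ _

/-- Homogeneous component of a product with homogeneous left factor. -/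
lemma decompose_mul_homog {i : G} {a : R} (hai : a ∈ 𝒜 i) (s : R) (g : G) :
    (DirectSum.decompose 𝒜 (a * s) g : R) = a * (DirectSum.decompose 𝒜 s (-i + g) : R) := by
  have h : g = i + (-i + g) := by abel
  conv_lhs => rw [h]
  exact DirectSum.coe_decompose_mul_add_of_left_mem 𝒜 hai

lemma rAnn_gradedRightIdeal {b : R} (hb : SetLike.IsHomogeneousElem 𝒜 b) :
    IsGradedRightIdeal 𝒜 (rAnn b) := by
  obtain ⟨i, hbi⟩ := hb
  constructor
  · intro x hx r
    rw [mem_rAnn] at *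
    rw [← mul_assoc, hx, zero_mul]
  · intro x hx g
    rw [mem_rAnn] at *
    have : (DirectSum.decompose 𝒜 (b * x) (i + g) : R) = b * (DirectSum.decompose 𝒜 x g : R) :=
      DirectSum.coe_decompose_mul_add_of_left_mem 𝒜 hbi
    rw [hx] at this
    simpa using this.symm

lemma mulLeftRange_gradedRightIdeal {a : R} (ha : SetLike.IsHomogeneousElem 𝒜 a) :
    IsGradedRightIdeal 𝒜 (mulLeftRange a) := by
  obtain ⟨i, hai⟩ := ha
  constructor
  · rintro x ⟨r, rfl⟩ s
    exact ⟨r * s, (mul_assoc a r s).symm⟩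
  · rintro x ⟨r, rfl⟩ g
    exact ⟨(DirectSum.decompose 𝒜 r (-i + g) : R), (decompose_mul_homog 𝒜 hai r g).symm⟩

lemma map_mulLeft_gradedRightIdeal {a : R} (ha : SetLike.IsHomogeneousElem 𝒜 a)
    {L : AddSubgroup R} (hL : IsGradedRightIdeal 𝒜 L) :
    IsGradedRightIdeal 𝒜 (L.map (AddMonoidHom.mulLeft a)) := by
  obtain ⟨i, hai⟩ := ha
  constructor
  · rintro x ⟨l, hl, rfl⟩ s
    exact ⟨l * s, hL.1 l hl s, (mul_assoc a l s).symm⟩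
  · rintro x ⟨l, hl, rfl⟩ g
    exact ⟨(DirectSum.decompose 𝒜 l (-i + g) : R), hL.2 l hl _,
      (decompose_mul_homog 𝒜 hai l g).symm⟩

lemma addSubgroup_ne_bot_iff {H : AddSubgroup R} : H ≠ ⊥ ↔ ∃ x ∈ H, x ≠ (0 : R) := by
  rw [← not_iff_not]
  push_neg
  constructor
  · rintro rfl x hx
    exact AddSubgroup.mem_bot.mp hx
  · intro h
    ext x
    simp only [AddSubgroup.mem_bot]
    exact ⟨h x, fun hx => hx ▸ H.zero_mem⟩

/-- Key essentiality lemma: if `aR` is gr-uniform, `rAnn a ≤ rAnn b` strictly witnessed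
by `x`, then `rAnn b` meets every nonzero graded right ideal. -/
lemma rAnn_essential {a b : R} (ha : SetLike.IsHomogeneousElem 𝒜 a)
    (hb : SetLike.IsHomogeneousElem 𝒜 b)
    (hu : GrUniform 𝒜 (mulLeftRange a)) (hle : rAnn a ≤ rAnn b)
    (x : R) (hbx : b * x = 0) (hax : a * x ≠ 0) :
    ∀ L : AddSubgroup R, IsGradedRightIdeal 𝒜 L → L ≠ ⊥ → rAnn b ⊓ L ≠ ⊥ := by
  intro L hL hL0
  set f := AddMonoidHom.mulLeft a with hf
  by_cases hmap : L.map f = ⊥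
  · -- then L ≤ rAnn a ≤ rAnn b
    have hsub : L ≤ rAnn b := by
      intro l hl
      have : f l ∈ L.map f := AddSubgroup.mem_map_of_mem f hl
      rw [hmap, AddSubgroup.mem_bot] at this
      exact hle (mem_rAnn.mpr this)
    rw [inf_eq_right.mpr hsub]
    exact hL0
  · have hK : (rAnn b).map f ≠ ⊥ := by
      rw [addSubgroup_ne_bot_iff]
      exact ⟨a * x, AddSubgroup.mem_map_of_mem f (mem_rAnn.mpr hbx), hax⟩
    have hKle : (rAnn b).map f ≤ mulLeftRange a := by
      rintro y ⟨s, _, rfl⟩; exact ⟨s, rfl⟩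
    have hLle : L.map f ≤ mulLeftRange a := by
      rintro y ⟨l, _, rfl⟩; exact ⟨l, rfl⟩
    have hint := hu.2 ((rAnn b).map f) (L.map f)
      (map_mulLeft_gradedRightIdeal 𝒜 ha (rAnn_gradedRightIdeal 𝒜 hb))
      (map_mulLeft_gradedRightIdeal 𝒜 ha hL) hKle hLle hK hmap
    rw [addSubgroup_ne_bot_iff] at hint
    obtain ⟨y, ⟨hy1, hy2⟩, hy0⟩ := hint
    obtain ⟨s, hs, hys⟩ := hy1
    obtain ⟨l, hl, hyl⟩ := hy2
    have hfs : a * s = y := hys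
    have hfl : a * l = y := hyl
    have hls : a * (l - s) = 0 := by
      rw [mul_sub, hfs, hfl, sub_self]
    have hbl : b * l = 0 := by
      have h1 : b * (l - s) = 0 := hle (mem_rAnn.mpr hls)
      have h2 : b * s = 0 := hs
      have : b * (l - s) + b * s = b * l := by rw [mul_sub, sub_add_cancel]
      rw [← this, h1, h2, add_zero]
    rw [addSubgroup_ne_bot_iff]
    refine ⟨l, ⟨mem_rAnn.mpr hbl, hl⟩, ?_⟩
    rintro rfl
    apply hy0
    rw [← hfl, mul_zero]

end Aux

/-- If `a` is a nonzero homogeneous element of a gr-prime, right gr-Goldie ring such that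
`aR` is gr-uniform, then `r-ann(a)` is maximal among right annihilators of nonzero
homogeneous elements. -/
theorem rAnn_maximal_of_grUniform
    {G R : Type*} [AddCommGroup G] [DecidableEq G] [Ring R]
    (𝒜 : G → AddSubgroup R) [GradedRing 𝒜]
    (hprime : GrPrime 𝒜) (hgoldie : GrGoldie 𝒜)
    (a : R) (ha0 : a ≠ 0) (ha : SetLike.IsHomogeneousElem 𝒜 a)
    (hu : GrUniform 𝒜 (mulLeftRange a)) :
    ∀ b : R, b ≠ 0 → SetLike.IsHomogeneousElem 𝒜 b → rAnn a ≤ rAnn b → rAnn a = rAnn b := by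
  intro b hb0 hb hle
  by_contra hne
  -- strict inclusion witness
  have hlt : rAnn a < rAnn b := lt_of_le_of_ne hle hne
  obtain ⟨x, hxb, hxa⟩ := SetLike.exists_of_lt hlt
  have hbx : b * x = 0 := hxb
  have hax : a * x ≠ 0 := fun h => hxa (mem_rAnn.mpr h)
  have hess := rAnn_essential 𝒜 ha hb hu hle x hbx hax
  -- the set T of candidates
  set T : R → Prop := fun c => c ≠ 0 ∧ SetLike.IsHomogeneousElem 𝒜 c ∧ rAnn b ≤ rAnn c with hT
  have hTb : T b := ⟨hb0, hb, le_rfl⟩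
  -- find a maximal element of T w.r.t. rAnn
  have hmax : ∃ c, T c ∧ ∀ d, T d → rAnn c ≤ rAnn d → rAnn c = rAnn d := by
    by_contra hno
    push_neg at hno
    have step : ∀ c : {c : R // T c}, ∃ d : {c : R // T c}, rAnn c.1 < rAnn d.1 := by
      rintro ⟨c, hc⟩
      obtain ⟨d, hd, hled, hned⟩ := hno c hc
      exact ⟨⟨d, hd⟩, lt_of_le_of_ne hled hned⟩
    choose g hg using step
    set F : ℕ → {c : R // T c} := fun n => g^[n] ⟨b, hTb⟩ with hF
    have hmono : StrictMono fun n => rAnn (F n).1 := by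
      apply strictMono_nat_of_lt_succ
      intro n
      have : F (n + 1) = g (F n) := Function.iterate_succ_apply' g n _
      rw [this]
      exact hg (F n)
    exact hgoldie.1 (fun n => (F n).1) (fun n => (F n).2.2.1) hmono
  obtain ⟨c, ⟨hc0, hc, hbc⟩, hcmax⟩ := hmax
  -- essentiality of rAnn c
  have hessc : ∀ L : AddSubgroup R, IsGradedRightIdeal 𝒜 L → L ≠ ⊥ → rAnn c ⊓ L ≠ ⊥ := by
    intro L hL hL0 hbot
    exact hess L hL hL0 (le_bot_iff.mp (hbot ▸ inf_le_inf_right L hbc))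
  -- by primeness find homogeneous w with c * w * c ≠ 0
  have hnz : ∃ r, c * r * c ≠ 0 := by
    by_contra hz
    push_neg at hz
    rcases hprime c c hc hc hz with h | h <;> exact hc0 h
  obtain ⟨r, hr⟩ := hnz
  have hw : ∃ g : G, c * (DirectSum.decompose 𝒜 r g : R) * c ≠ 0 := by
    classical
    by_contra hz
    push_neg at hz
    apply hr
    conv_lhs => rw [← DirectSum.sum_support_decompose 𝒜 r]
    rw [Finset.mul_sum, Finset.sum_mul]
    apply Finset.sum_eq_zero
    intro g _
    exact hz g
  obtain ⟨gw, hcwc⟩ := hw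
  set w : R := (DirectSum.decompose 𝒜 r gw : R) with hwdef
  have hwhom : SetLike.IsHomogeneousElem 𝒜 w := ⟨gw, SetLike.coe_mem _⟩
  have hwc0 : w * c ≠ 0 := fun h => hcwc (by rw [mul_assoc, h, mul_zero])
  -- maximality applied to w*c and c*w*c
  have hTwc : T (w * c) := ⟨hwc0, SetLike.IsHomogeneousElem.mul hwhom hc,
    hbc.trans (rAnn_le_rAnn_mul w c)⟩
  have heq1 : rAnn c = rAnn (w * c) := hcmax _ hTwc (rAnn_le_rAnn_mul w c)
  have hTcwc : T (c * w * c) := ⟨hcwc, SetLike.IsHomogeneousElem.mul (SetLike.IsHomogeneousElem.mul hc hwhom) hc,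
    hbc.trans (rAnn_le_rAnn_mul_mul c w c)⟩
  have heq2 : rAnn c = rAnn (c * w * c) := hcmax _ hTcwc (rAnn_le_rAnn_mul_mul c w c)
  -- apply essentiality with L = (w*c)R
  have hLwc : mulLeftRange (w * c) ≠ ⊥ := by
    rw [addSubgroup_ne_bot_iff]
    exact ⟨w * c, ⟨1, mul_one _⟩, hwc0⟩
  have hint := hessc (mulLeftRange (w * c))
    (mulLeftRange_gradedRightIdeal 𝒜 (SetLike.IsHomogeneousElem.mul hwhom hc)) hLwc
  rw [addSubgroup_ne_bot_iff] at hint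
  obtain ⟨y, ⟨hy1, hy2⟩, hy0⟩ := hint
  obtain ⟨u, rfl⟩ := hy2
  -- c * (w*c*u) = 0, so u ∈ rAnn (c*w*c) = rAnn c = rAnn (w*c), so w*c*u = 0
  have hcu : (c * w * c) * u = 0 := by
    have h : c * (w * c * u) = 0 := hy1
    simpa [mul_assoc] using h
  have hu2 : u ∈ rAnn (w * c) := heq1 ▸ (heq2 ▸ mem_rAnn.mpr hcu : u ∈ rAnn c)
  exact hy0 (mem_rAnn.mp hu2)
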